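/- arXiv:1906.10801 — 2 statements merged into one kernel-verified Lean document; each statement's English description precedes it below -/
import Mathlib

section
/- Let G be a graph without isolated vertices and let weights satisfy 0 ≤ 2·w_v ≤ w_e. Then for any minimum vertex cover S_vc of G, the mixed set (S_vc, ∅) is a minimum-weight mixed dominating set of G; in particular, the minimum weight of a mixed dominating set of G equals w_v·τ(G). -/
/-- Mixed dominating set, see paper. -/
def IsMixedDomSet {V : Type*} (G : SimpleGraph V) (VD : Finset V) (ED : Finset (Sym2 V)) :
    Prop :=
  (∀ e ∈ ED, e ∈ G.edgeSet) ∧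
  (∀ v : V, v ∉ VD → (∃ e ∈ ED, v ∈ e) ∨ ∃ u ∈ VD, G.Adj v u) ∧
  (∀ e ∈ G.edgeSet, e ∉ ED → ∃ v ∈ e, v ∈ VD ∨ ∃ f ∈ ED, v ∈ f)

/-- A vertex cover contains at least one endpoint of every edge. -/
def IsVertexCover {V : Type*} (G : SimpleGraph V) (C : Finset V) : Prop :=
  ∀ ⦃u w : V⦄, G.Adj u w → u ∈ C ∨ w ∈ C

/-!
A vertex cover `C` of a graph without isolated vertices is itself a mixed dominating set
`(C, ∅)`. Conversely, any mixed dominating set `(V_D, E_D)` yields the vertex cover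
`V_D ∪ V(E_D)` of size at most `|V_D| + 2|E_D|`, so `τ(G) ≤ |V_D| + 2|E_D|`; multiplying by
`w_v` and using `2 w_v ≤ w_e` bounds `w_v τ(G)` by the weight of `(V_D, E_D)`.
-/

section

open Finset

variable {V : Type*} {G : SimpleGraph V}

theorem IsVertexCover.isMixedDomSet_empty {C : Finset V} (hC : IsVertexCover G C)
    (hiso : ∀ v, ∃ u, G.Adj v u) : IsMixedDomSet G C ∅ := by
  refine ⟨by simp, fun v hv => Or.inr ?_, fun e he _ => ?_⟩
  · obtain ⟨u, hvu⟩ := hiso v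
    exact ⟨u, (hC hvu).resolve_left hv, hvu⟩
  · induction e using Sym2.ind with
    | _ u w =>
      rcases hC (G.mem_edgeSet.mp he) with h | h
      · exact ⟨u, Sym2.mem_mk_left _ _, Or.inl h⟩
      · exact ⟨w, Sym2.mem_mk_right _ _, Or.inl h⟩

theorem IsMixedDomSet.isVertexCover_union_biUnion_toFinset [DecidableEq V] {VD : Finset V}
    {ED : Finset (Sym2 V)} (hD : IsMixedDomSet G VD ED) :
    IsVertexCover G (VD ∪ ED.biUnion Sym2.toFinset) := by
  intro u w huw
  have hendpoint : ∀ f ∈ ED, ∀ v ∈ f, v ∈ VD ∪ ED.biUnion Sym2.toFinset := fun f hf v hv =>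
    mem_union_right _ (mem_biUnion.mpr ⟨f, hf, Sym2.mem_toFinset.mpr hv⟩)
  by_cases huwED : s(u, w) ∈ ED
  · exact Or.inl (hendpoint _ huwED u (Sym2.mem_mk_left _ _))
  obtain ⟨v, hv, hdom⟩ := hD.2.2 _ (G.mem_edgeSet.mpr huw) huwED
  have hvC : v ∈ VD ∪ ED.biUnion Sym2.toFinset := by
    rcases hdom with hvVD | ⟨f, hf, hvf⟩
    · exact mem_union_left _ hvVD
    · exact hendpoint f hf v hvf
  rcases Sym2.mem_iff.mp hv with rfl | rfl
  · exact Or.inl hvC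
  · exact Or.inr hvC

theorem Sym2.card_toFinset_le_two [DecidableEq V] (e : Sym2 V) : #e.toFinset ≤ 2 := by
  rw [Sym2.card_toFinset]
  split_ifs <;> norm_num

theorem IsMixedDomSet.exists_isVertexCover_card_le {VD : Finset V} {ED : Finset (Sym2 V)}
    (hD : IsMixedDomSet G VD ED) : ∃ C, IsVertexCover G C ∧ #C ≤ #VD + 2 * #ED := by
  classical
  refine ⟨_, hD.isVertexCover_union_biUnion_toFinset, ?_⟩
  calc #(VD ∪ ED.biUnion Sym2.toFinset) ≤ #VD + #(ED.biUnion Sym2.toFinset) := card_union_le _ _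
    _ ≤ #VD + #ED * 2 := by
      gcongr
      exact card_biUnion_le_card_mul _ _ 2 fun e _ => e.card_toFinset_le_two
    _ = #VD + 2 * #ED := by ring

end

/-- Let `G` have no isolated vertices and `0 ≤ 2 w_v ≤ w_e`. Then any minimum vertex cover
`S_vc` yields a minimum-weight mixed dominating set `(S_vc, ∅)`; in particular the minimum
weight of a mixed dominating set equals `w_v * τ(G)` (here `|S_vc| = τ(G)`). -/
theorem minVertexCover_is_optimal_mixedDomSet {V : Type*} (G : SimpleGraph V)
    (hiso : ∀ v : V, ∃ u : V, G.Adj v u)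
    (wv we : ℝ) (hwv : 0 ≤ wv) (hwe : 2 * wv ≤ we)
    (Svc : Finset V) (hSvc : IsVertexCover G Svc)
    (hSvcmin : ∀ C : Finset V, IsVertexCover G C → Svc.card ≤ C.card) :
    IsMixedDomSet G Svc ∅ ∧
    (∀ (VD : Finset V) (ED : Finset (Sym2 V)), IsMixedDomSet G VD ED →
      wv * Svc.card + we * (∅ : Finset (Sym2 V)).card ≤ wv * VD.card + we * ED.card) ∧
    wv * Svc.card + we * (∅ : Finset (Sym2 V)).card = wv * Svc.card := by
  refine ⟨hSvc.isMixedDomSet_empty hiso, fun VD ED hD => ?_, by simp⟩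
  obtain ⟨C, hC, hCcard⟩ := hD.exists_isVertexCover_card_le
  have hcard : (Svc.card : ℝ) ≤ VD.card + 2 * ED.card := by
    exact_mod_cast (hSvcmin C hC).trans hCcard
  calc wv * Svc.card + we * (∅ : Finset (Sym2 V)).card = wv * Svc.card := by simp
    _ ≤ wv * (VD.card + 2 * ED.card) := mul_le_mul_of_nonneg_left hcard hwv
    _ = wv * VD.card + 2 * wv * ED.card := by ring
    _ ≤ wv * VD.card + we * ED.card := by gcongr
end

section
/- Let G be a graph without isolated vertices, let weights satisfy 0 < w_v and 2·w_v ≤ w_e, and let α ≥ 1. If D is a mixed dominating set of G with w(D) ≤ α·w(S_wmd), where S_wmd is a minimum-weight mixed dominating set of G, then V(D) is a vertex cover of G with |V(D)| ≤ α·τ(G). -/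
/-
Every vertex cover `C` of a graph without isolated vertices is a mixed dominating set `(C, ∅)`,
so a minimum mixed dominating set weighs at most `w_v τ(G)`. On the other hand, condition (ii) makes
`V(D)` a vertex cover, and since an edge has at most two endpoints,
`w_v |V(D)| ≤ w_v |V_D| + 2 w_v |E_D| ≤ w(D) ≤ α w(S_wmd) ≤ α w_v τ(G)`.
-/

open Finset

namespace MixedSet

variable {V : Type*} [DecidableEq V]

/-- The set `V(D)` of vertices of `D = (VD, ED)`. -/
def support (VD : Finset V) (ED : Finset (Sym2 V)) : Finset V :=
  VD ∪ ED.biUnion Sym2.toFinset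

theorem mem_support {VD : Finset V} {ED : Finset (Sym2 V)} {v : V} :
    v ∈ support VD ED ↔ v ∈ VD ∨ ∃ e ∈ ED, v ∈ e := by
  simp only [support, mem_union, mem_biUnion, Sym2.mem_toFinset]

theorem card_support_le (VD : Finset V) (ED : Finset (Sym2 V)) :
    #(support VD ED) ≤ #VD + 2 * #ED :=
  calc #(support VD ED) ≤ #VD + #(ED.biUnion Sym2.toFinset) := card_union_le _ _
    _ ≤ #VD + ∑ e ∈ ED, #e.toFinset := by gcongr; exact card_biUnion_le
    _ ≤ #VD + ∑ _e ∈ ED, 2 := by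
        gcongr with e
        rw [Sym2.card_toFinset]
        split_ifs <;> omega
    _ = #VD + 2 * #ED := by rw [sum_const, smul_eq_mul, mul_comm]

theorem weight_support_le {wv we : ℝ} (hwv : 0 ≤ wv) (hwe : 2 * wv ≤ we)
    (VD : Finset V) (ED : Finset (Sym2 V)) :
    wv * #(support VD ED) ≤ wv * #VD + we * #ED :=
  calc wv * (#(support VD ED) : ℝ) ≤ wv * (#VD + 2 * #ED) := by
        gcongr; exact_mod_cast card_support_le VD ED
    _ = wv * #VD + 2 * wv * #ED := by ring
    _ ≤ wv * #VD + we * #ED := by gcongr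

end MixedSet

open MixedSet in
theorem IsMixedDomSet.isVertexCover_support {V : Type*} [DecidableEq V] {G : SimpleGraph V}
    {VD : Finset V} {ED : Finset (Sym2 V)}
    (hD : IsMixedDomSet G VD ED) : IsVertexCover G (support VD ED) := by
  intro u w huw
  by_cases huwD : s(u, w) ∈ ED
  · exact Or.inl (mem_support.2 (Or.inr ⟨_, huwD, Sym2.mem_mk_left u w⟩))
  · obtain ⟨v, hv, hvD⟩ := hD.2.2 _ huw huwD
    rcases Sym2.mem_iff.mp hv with rfl | rfl
    · exact Or.inl (mem_support.2 hvD)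
    · exact Or.inr (mem_support.2 hvD)

theorem IsVertexCover.isMixedDomSet {V : Type*} {G : SimpleGraph V} {C : Finset V}
    (hiso : ∀ v : V, ∃ u : V, G.Adj v u) (hC : IsVertexCover G C) : IsMixedDomSet G C ∅ := by
  refine ⟨by simp, fun v hv => ?_, fun e he _ => ?_⟩
  · obtain ⟨u, hvu⟩ := hiso v
    exact Or.inr ⟨u, (hC hvu).resolve_left hv, hvu⟩
  · induction e using Sym2.ind with
    | _ a b =>
      rcases hC he with ha | hb
      · exact ⟨a, Sym2.mem_mk_left a b, Or.inl ha⟩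
      · exact ⟨b, Sym2.mem_mk_right a b, Or.inl hb⟩

theorem approx_mixedDomSet_gives_approx_vertexCover_general {V : Type*} (G : SimpleGraph V)
    (hiso : ∀ v : V, ∃ u : V, G.Adj v u)
    (wv we : ℝ) (hwv : 0 < wv) (hwe : 2 * wv ≤ we)
    (α : ℝ) (hα : 1 ≤ α)
    (SVD : Finset V) (SED : Finset (Sym2 V))
    (hSmin : ∀ (VD : Finset V) (ED : Finset (Sym2 V)), IsMixedDomSet G VD ED →
      wv * SVD.card + we * SED.card ≤ wv * VD.card + we * ED.card)
    (VD : Finset V) (ED : Finset (Sym2 V)) (hD : IsMixedDomSet G VD ED)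
    (hDapx : wv * VD.card + we * ED.card ≤ α * (wv * SVD.card + we * SED.card))
    (VofD : Finset V) (hVofD : ∀ v : V, v ∈ VofD ↔ v ∈ VD ∨ ∃ e ∈ ED, v ∈ e)
    (τ : ℕ) (hτ : ∃ C₀ : Finset V, IsVertexCover G C₀ ∧ C₀.card = τ) :
    IsVertexCover G VofD ∧ (VofD.card : ℝ) ≤ α * τ := by
  classical
  obtain rfl : VofD = MixedSet.support VD ED :=
    ext fun v => (hVofD v).trans MixedSet.mem_support.symm
  obtain ⟨C, hC, rfl⟩ := hτ
  have hSC : wv * #SVD + we * #SED ≤ wv * #C := by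
    simpa using hSmin C ∅ (hC.isMixedDomSet hiso)
  refine ⟨hD.isVertexCover_support, le_of_mul_le_mul_left ?_ hwv⟩
  calc wv * (#(MixedSet.support VD ED) : ℝ) ≤ wv * #VD + we * #ED :=
        MixedSet.weight_support_le hwv.le hwe VD ED
    _ ≤ α * (wv * #SVD + we * #SED) := hDapx
    _ ≤ α * (wv * #C) := by gcongr
    _ = wv * (α * #C) := by ring

/-- Let `G` have no isolated vertices, `0 < w_v`, `2 w_v ≤ w_e`, `α ≥ 1`. If `D = (VD, ED)`
is a mixed dominating set with `w(D) ≤ α * w(S_wmd)` for a minimum-weight mixed dominating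
set `S_wmd`, then `V(D)` is a vertex cover of size at most `α * τ(G)`. -/
theorem approx_mixedDomSet_gives_approx_vertexCover {V : Type*} (G : SimpleGraph V)
    (hiso : ∀ v : V, ∃ u : V, G.Adj v u)
    (wv we : ℝ) (hwv : 0 < wv) (hwe : 2 * wv ≤ we)
    (α : ℝ) (hα : 1 ≤ α)
    (SVD : Finset V) (SED : Finset (Sym2 V)) (hS : IsMixedDomSet G SVD SED)
    (hSmin : ∀ (VD : Finset V) (ED : Finset (Sym2 V)), IsMixedDomSet G VD ED →
      wv * SVD.card + we * SED.card ≤ wv * VD.card + we * ED.card)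
    (VD : Finset V) (ED : Finset (Sym2 V)) (hD : IsMixedDomSet G VD ED)
    (hDapx : wv * VD.card + we * ED.card ≤ α * (wv * SVD.card + we * SED.card))
    (VofD : Finset V) (hVofD : ∀ v : V, v ∈ VofD ↔ v ∈ VD ∨ ∃ e ∈ ED, v ∈ e)
    (τ : ℕ) (hτ : ∃ C₀ : Finset V, IsVertexCover G C₀ ∧ C₀.card = τ)
    (hτmin : ∀ C₀ : Finset V, IsVertexCover G C₀ → τ ≤ C₀.card) :
    IsVertexCover G VofD ∧ (VofD.card : ℝ) ≤ α * τ :=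
  approx_mixedDomSet_gives_approx_vertexCover_general G hiso wv we hwv hwe α hα SVD SED hSmin VD ED
    hD hDapx VofD hVofD τ hτ
end
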